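/- arXiv:2106.00004 — 3 statements merged into one kernel-verified Lean document; each statement's English description precedes it below -/
import Mathlib

section
/- Let K be a number field with ring of integers 𝓞_K, let p be a rational prime, and let f be a positive integer. Let P_f be the number of distinct prime ideals of 𝓞_K lying above p with residue degree f over p, and let N_f be the number of monic irreducible polynomials of degree f in 𝔽_p[x]. If P_f > N_f, then for every θ ∈ 𝓞_K with K = ℚ(θ), p divides the index (𝓞_K : ℤ[θ]). -/
/-!
If `p ∤ (𝓞_K : ℤ[θ])`, then `𝓞_K = ℤ[θ] + p 𝓞_K`. Hence for every prime `P` above `p` the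
residue of `θ` generates `𝓞_K / P` over `𝔽_p`, so its minimal polynomial `g_P` is monic,
irreducible, and of degree the residue degree of `P`. Moreover `P` is recovered from `g_P` as the
set of `x ≡ q(θ) mod p 𝓞_K` with `g_P ∣ q mod p`, so `P ↦ g_P` is injective and `P_f ≤ N_f`.
-/

open Polynomial

theorem AddSubgroup.exists_nsmul_sub_mem_of_coprime_index {G : Type*} [AddCommGroup G]
    (H : AddSubgroup G) {m : ℕ} (hm : m.Coprime H.index) (x : G) : ∃ y, x - m • y ∈ H := by
  obtain ⟨u, v, huv⟩ := Nat.isCoprime_iff_coprime.mpr hm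
  refine ⟨u • x, ?_⟩
  have hx : x - m • u • x = v • (H.index • x) := by
    calc x - m • u • x = ((u * m + v * H.index : ℤ) • x) - m • u • x := by rw [huv, one_smul]
      _ = v • (H.index • x) := by
        rw [add_smul, mul_smul, mul_smul, natCast_zsmul, natCast_zsmul, smul_comm u m x]
        abel
  rw [hx]
  exact H.zsmul_mem (H.nsmul_index_mem x) v

theorem Polynomial.finite_setOf_natDegree_le {R : Type*} [Semiring R] [Finite R] (n : ℕ) :
    {g : R[X] | g.natDegree ≤ n}.Finite := by
  have : Finite (degreeLT R (n + 1)) := .of_equiv _ (degreeLTEquiv R (n + 1)).toEquiv.symm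
  refine (Set.toFinite (degreeLT R (n + 1) : Set R[X])).subset fun g hg => ?_
  rw [SetLike.mem_coe, mem_degreeLT]
  exact (degree_le_of_natDegree_le hg).trans_lt (by exact_mod_cast Nat.lt_succ_self n)

theorem Polynomial.card_monic_irreducible_natDegree_congr {A B : Type*} [CommRing A]
    [CommRing B] (e : A ≃+* B) (f : ℕ) :
    Nat.card {g : A[X] // g.Monic ∧ Irreducible g ∧ g.natDegree = f} =
      Nat.card {g : B[X] // g.Monic ∧ Irreducible g ∧ g.natDegree = f} :=
  Nat.card_congr <| (mapEquiv e).toEquiv.subtypeEquiv fun g =>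
    e.injective.monic_map_iff.and <| (MulEquiv.irreducible_iff (mapEquiv e).toMulEquiv).symm.and <|
      by rw [← natDegree_map_eq_of_injective (f := (e : A →+* B)) e.injective g]; rfl

theorem exists_aeval_sub_mem_span_of_not_dvd_index {S : Type*} [CommRing S] {p : ℕ}
    (hp : p.Prime) {θ : S}
    (h : ¬ p ∣ (Subalgebra.toSubmodule (Algebra.adjoin ℤ {θ})).toAddSubgroup.index) (x : S) :
    ∃ q : ℤ[X], x - aeval θ q ∈ Ideal.map (algebraMap ℤ S) (Ideal.span {(p : ℤ)}) := by
  obtain ⟨y, hy⟩ := AddSubgroup.exists_nsmul_sub_mem_of_coprime_index _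
    (hp.coprime_iff_not_dvd.mpr h) x
  obtain ⟨q, hq⟩ : x - p • y ∈ (aeval (R := ℤ) θ).range := by
    rwa [← Algebra.adjoin_singleton_eq_range_aeval]
  refine ⟨q, ?_⟩
  rw [Ideal.map_span, Set.image_singleton, Ideal.mem_span_singleton]
  exact ⟨y, by rw [show aeval θ q = x - p • y from hq, nsmul_eq_mul, eq_intCast,
    Int.cast_natCast, mul_comm, sub_sub_cancel]⟩

section ResidueMinpoly

attribute [local instance] Ideal.Quotient.field

variable {R S : Type*} [CommRing R] [CommRing S] [Algebra R S] {𝔭 : Ideal R}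
  (P : Ideal S) [P.LiesOver 𝔭] {θ : S}

theorem aeval_quotientMk_map (q : R[X]) :
    aeval (Ideal.Quotient.mk P θ) (q.map (Ideal.Quotient.mk 𝔭)) =
      Ideal.Quotient.mk P (aeval θ q) := by
  rw [show Ideal.Quotient.mk 𝔭 = algebraMap R (R ⧸ 𝔭) from rfl, aeval_map_algebraMap,
    ← Ideal.Quotient.mkₐ_eq_mk R, aeval_algHom_apply]

theorem adjoin_quotientMk_eq_top
    (hθ : ∀ x : S, ∃ q : R[X], x - aeval θ q ∈ 𝔭.map (algebraMap R S)) :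
    Algebra.adjoin (R ⧸ 𝔭) {Ideal.Quotient.mk P θ} = ⊤ := by
  refine eq_top_iff.mpr fun y _ => ?_
  obtain ⟨x, rfl⟩ := Ideal.Quotient.mk_surjective y
  obtain ⟨q, hq⟩ := hθ x
  have hx : Ideal.Quotient.mk P x =
      aeval (Ideal.Quotient.mk P θ) (q.map (Ideal.Quotient.mk 𝔭)) := by
    rw [aeval_quotientMk_map, Ideal.Quotient.eq]
    exact Ideal.map_le_of_le_comap (Ideal.over_def P 𝔭).le hq
  rw [hx]
  exact aeval_mem_adjoin_singleton _ _

variable [𝔭.IsMaximal]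

theorem aeval_mem_iff_minpoly_dvd (q : R[X]) :
    aeval θ q ∈ P ↔ minpoly (R ⧸ 𝔭) (Ideal.Quotient.mk P θ) ∣ q.map (Ideal.Quotient.mk 𝔭) := by
  rw [minpoly.dvd_iff, aeval_quotientMk_map, Ideal.Quotient.eq_zero_iff_mem]

theorem mem_iff_exists_minpoly_dvd
    (hθ : ∀ x : S, ∃ q : R[X], x - aeval θ q ∈ 𝔭.map (algebraMap R S)) (x : S) :
    x ∈ P ↔ ∃ q : R[X], x - aeval θ q ∈ 𝔭.map (algebraMap R S) ∧
      minpoly (R ⧸ 𝔭) (Ideal.Quotient.mk P θ) ∣ q.map (Ideal.Quotient.mk 𝔭) := by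
  have hle : 𝔭.map (algebraMap R S) ≤ P := Ideal.map_le_of_le_comap (Ideal.over_def P 𝔭).le
  constructor
  · intro hx
    obtain ⟨q, hq⟩ := hθ x
    refine ⟨q, hq, (aeval_mem_iff_minpoly_dvd P q).mp ?_⟩
    simpa using P.sub_mem hx (hle hq)
  · rintro ⟨q, hq, hdvd⟩
    simpa using P.add_mem (hle hq) ((aeval_mem_iff_minpoly_dvd P q).mpr hdvd)

theorem eq_of_minpoly_quotientMk_eq
    (hθ : ∀ x : S, ∃ q : R[X], x - aeval θ q ∈ 𝔭.map (algebraMap R S))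
    {Q : Ideal S} [Q.LiesOver 𝔭]
    (h : minpoly (R ⧸ 𝔭) (Ideal.Quotient.mk P θ) = minpoly (R ⧸ 𝔭) (Ideal.Quotient.mk Q θ)) :
    P = Q :=
  Ideal.ext fun x => by
    rw [mem_iff_exists_minpoly_dvd P hθ, mem_iff_exists_minpoly_dvd Q hθ, h]

theorem natDegree_minpoly_quotientMk [Module.Finite R S]
    (hθ : ∀ x : S, ∃ q : R[X], x - aeval θ q ∈ 𝔭.map (algebraMap R S)) :
    (minpoly (R ⧸ 𝔭) (Ideal.Quotient.mk P θ)).natDegree = 𝔭.inertiaDeg' P := by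
  rw [Ideal.inertiaDeg'_algebraMap,
    (PowerBasis.ofAdjoinEqTop (IsIntegral.of_finite _ _) (adjoin_quotientMk_eq_top P hθ)).finrank]
  rfl

theorem card_primes_inertiaDeg_eq_le [Module.Finite R S] [Finite (R ⧸ 𝔭)]
    (hθ : ∀ x : S, ∃ q : R[X], x - aeval θ q ∈ 𝔭.map (algebraMap R S)) (f : ℕ) :
    Nat.card {P : Ideal S // P.IsPrime ∧ P.LiesOver 𝔭 ∧ 𝔭.inertiaDeg' P = f} ≤
      Nat.card {g : (R ⧸ 𝔭)[X] // g.Monic ∧ Irreducible g ∧ g.natDegree = f} := by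
  have : Finite {g : (R ⧸ 𝔭)[X] // g.Monic ∧ Irreducible g ∧ g.natDegree = f} :=
    Set.Finite.to_subtype <| (finite_setOf_natDegree_le f).subset fun g hg => hg.2.2.le
  let residueMinpoly (P : {P : Ideal S // P.IsPrime ∧ P.LiesOver 𝔭 ∧ 𝔭.inertiaDeg' P = f}) :
      {g : (R ⧸ 𝔭)[X] // g.Monic ∧ Irreducible g ∧ g.natDegree = f} :=
    have := P.2.1
    have := P.2.2.1
    have hθP : IsIntegral (R ⧸ 𝔭) (Ideal.Quotient.mk P.1 θ) := IsIntegral.of_finite _ _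
    ⟨_, minpoly.monic hθP, minpoly.irreducible hθP,
      (natDegree_minpoly_quotientMk P.1 hθ).trans P.2.2.2⟩
  refine Nat.card_le_card_of_injective residueMinpoly fun P Q hPQ => Subtype.ext ?_
  have := P.2.2.1
  have := Q.2.2.1
  exact eq_of_minpoly_quotientMk_eq P.1 hθ (congrArg Subtype.val hPQ)

end ResidueMinpoly

theorem common_index_divisor_general
    {K : Type*} [Field K] [NumberField K] (p : ℕ) (hp : p.Prime) (f : ℕ)
    (h : Nat.card {P : Ideal (NumberField.RingOfIntegers K) //
          P.IsPrime ∧ P.LiesOver (Ideal.span {(p : ℤ)}) ∧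
            Ideal.inertiaDeg'
              (Ideal.span {(p : ℤ)}) P = f} >
        Nat.card {g : Polynomial (ZMod p) // g.Monic ∧ Irreducible g ∧ g.natDegree = f}) :
    ∀ θ : NumberField.RingOfIntegers K, Algebra.adjoin ℚ {(θ : K)} = ⊤ →
      p ∣ (Subalgebra.toSubmodule (Algebra.adjoin ℤ {θ})).toAddSubgroup.index := by
  intro θ _
  by_contra hpθ
  have : Fact p.Prime := ⟨hp⟩
  refine h.not_ge ?_
  rw [← card_monic_irreducible_natDegree_congr (Int.quotientSpanNatEquivZMod p)]
  exact card_primes_inertiaDeg_eq_le (exists_aeval_sub_mem_span_of_not_dvd_index hp hpθ) f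

/-- Let `K` be a number field, `p` a rational prime, and `f` a positive integer. If the
number of prime ideals of `𝓞_K` lying above `p` with residue degree `f` exceeds the
number of monic irreducible polynomials of degree `f` over `𝔽_p`, then `p` divides the
index `(𝓞_K : ℤ[θ])` for every `θ ∈ 𝓞_K` generating `K` over `ℚ`. -/
theorem common_index_divisor
    {K : Type*} [Field K] [NumberField K] (p : ℕ) (hp : p.Prime) (f : ℕ) (hf : 0 < f)
    (h : Nat.card {P : Ideal (NumberField.RingOfIntegers K) //
          P.IsPrime ∧ P.LiesOver (Ideal.span {(p : ℤ)}) ∧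
            Ideal.inertiaDeg'
              (Ideal.span {(p : ℤ)}) P = f} >
        Nat.card {g : Polynomial (ZMod p) // g.Monic ∧ Irreducible g ∧ g.natDegree = f}) :
    ∀ θ : NumberField.RingOfIntegers K, Algebra.adjoin ℚ {(θ : K)} = ⊤ →
      p ∣ (Subalgebra.toSubmodule (Algebra.adjoin ℤ {θ})).toAddSubgroup.index :=
  common_index_divisor_general p hp f h
end

section
/- Let n ≥ 2 be an integer, let n* = ∏_{p prime, p | n} p be the radical of n, and let u be a positive integer coprime to n. Then f(x) = x^n − (n*)^u is irreducible over ℚ, and the number field K = ℚ(α), where α is a complex root of f, is monogenic. -/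
open Polynomial Module

/-!
Write `m` for the radical of `n`. As `u` is invertible modulo `n`, a suitable product
`θ = α ^ s * m ^ t` satisfies `θ ^ n = m`. Since `m` is squarefree and divisible by every prime
factor of `n`, `X ^ n - m` is Eisenstein at each such prime, so `θ` has degree `n`; as `ℚ(α)` has
degree at most `n`, `f` is the minimal polynomial of `α` and `K = ℚ(θ)`. The discriminant of
`ℤ[θ]` is `± n ^ n * m ^ (n - 1)`, so `d • 𝓞_K ⊆ ℤ[θ]` with every prime factor of `d` dividing `m`.
At a prime where the minimal polynomial of `θ` is Eisenstein, `p • z ∈ ℤ[θ]` forces `z ∈ ℤ[θ]`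
for integral `z`; stripping the prime factors of `d` one at a time gives `ℤ[θ] = 𝓞_K`.
-/

theorem exists_pow_eq_of_pow_eq_pow_of_coprime {G₀ : Type*} [CommGroupWithZero G₀] {x a : G₀}
    {n u : ℕ} (ha : a ≠ 0) (hcop : u.Coprime n) (h : x ^ n = a ^ u) : ∃ y : G₀, y ^ n = a := by
  obtain ⟨s, t, hst⟩ := Nat.Coprime.isCoprime hcop
  refine ⟨x ^ s * a ^ t, ?_⟩
  calc (x ^ s * a ^ t) ^ n = (x ^ n) ^ s * a ^ (t * n) := by
        rw [mul_pow, ← zpow_natCast, ← zpow_natCast, ← zpow_natCast, ← zpow_mul, ← zpow_mul,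
          ← zpow_mul, mul_comm s]
    _ = a ^ (s * u + t * n) := by
        rw [h, ← zpow_natCast, ← zpow_mul, ← zpow_add₀ ha, mul_comm (u : ℤ)]
    _ = a := by rw [hst, zpow_one]

theorem Prime.dvd_natCast_radical {p : ℤ} (hp : Prime p) {n : ℕ} (hn : n ≠ 0) (hpn : p ∣ n) :
    p ∣ (UniqueFactorizationMonoid.radical n : ℕ) := by
  rw [← Int.natAbs_dvd_natAbs, Int.natAbs_natCast] at hpn ⊢
  exact (UniqueFactorizationMonoid.dvd_radical_iff
    (Int.prime_iff_natAbs_prime.1 hp).prime.isRadical hn).2 hpn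

theorem Polynomial.isEisensteinAt_X_pow_sub_C_of_squarefree {R : Type*} [CommRing R] {a p : R}
    (ha : Squarefree a) (hp : Prime p) (hpa : p ∣ a) {n : ℕ} (hn : n ≠ 0) :
    (X ^ n - C a).IsEisensteinAt (Submodule.span R {p}) where
  leading := by
    rw [(monic_X_pow_sub_C a hn).leadingCoeff, Ideal.submodule_span_eq, Ideal.mem_span_singleton]
    exact hp.not_dvd_one
  mem {i} hi := by
    have : Nontrivial R := nontrivial_of_ne p 0 hp.ne_zero
    rw [natDegree_X_pow_sub_C] at hi
    rw [Ideal.submodule_span_eq, Ideal.mem_span_singleton, coeff_sub, coeff_X_pow, if_neg hi.ne,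
      coeff_C]
    split_ifs <;> simp [hpa]
  notMem := by
    rw [coeff_sub, coeff_X_pow, if_neg hn.symm, coeff_C_zero, zero_sub, Ideal.submodule_span_eq,
      Ideal.span_singleton_pow, Ideal.mem_span_singleton, dvd_neg, sq]
    exact fun h ↦ hp.not_isUnit (ha p h)

theorem minpoly.eq_X_pow_sub_C_of_squarefree {R S : Type*} [CommRing R] [IsDomain R]
    [IsIntegrallyClosed R] [CommRing S] [IsDomain S] [Algebra R S] [Module.IsTorsionFree R S]
    {a p : R} (ha : Squarefree a) (hp : Prime p) (hpa : p ∣ a) {n : ℕ} (hn : n ≠ 0) {x : S}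
    (hx : x ^ n = algebraMap R S a) : minpoly R x = X ^ n - C a := by
  have hmo : (X ^ n - C a).Monic := monic_X_pow_sub_C a hn
  have hroot : Polynomial.aeval x (X ^ n - C a) = 0 := by simp [hx]
  have hint : IsIntegral R x := ⟨_, hmo, hroot⟩
  have hirr : Irreducible (X ^ n - C a) :=
    (isEisensteinAt_X_pow_sub_C_of_squarefree ha hp hpa hn).irreducible
      ((Ideal.span_singleton_prime hp.ne_zero).2 hp) hmo.isPrimitive
      (by rw [natDegree_X_pow_sub_C]; exact Nat.pos_of_ne_zero hn)
  exact eq_of_monic_of_associated (minpoly.monic hint) hmo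
    ((minpoly.irreducible hint).associated_of_dvd hirr (minpoly.isIntegrallyClosed_dvd hint hroot))

theorem finrank_eq_natDegree_minpoly_of_adjoin_eq_top {F L : Type*} [Field F] [CommRing L]
    [Algebra F L] {x : L} (hx : IsIntegral F x) (hgen : Algebra.adjoin F {x} = ⊤) :
    finrank F L = (minpoly F x).natDegree :=
  (PowerBasis.ofAdjoinEqTop hx hgen).finrank

theorem Algebra.adjoin_eq_top_of_finrank_le_natDegree_minpoly {F L : Type*} [Field F] [Field L]
    [Algebra F L] [FiniteDimensional F L] {x : L} (h : finrank F L ≤ (minpoly F x).natDegree) :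
    Algebra.adjoin F {x} = ⊤ := by
  have hx : IsIntegral F x := .of_finite F x
  rw [← IntermediateField.adjoin_simple_eq_top_iff_of_isAlgebraic hx.isAlgebraic]
  refine IntermediateField.eq_of_le_of_finrank_le le_top ?_
  rwa [IntermediateField.finrank_top', IntermediateField.adjoin.finrank hx]

theorem minpoly.eq_of_adjoin_eq_top {F L : Type*} [Field F] [CommRing L] [Algebra F L] {x : L}
    (hgen : Algebra.adjoin F {x} = ⊤) {f : F[X]} (hmo : f.Monic) (hfx : Polynomial.aeval x f = 0)
    (hdeg : f.natDegree ≤ finrank F L) : minpoly F x = f := by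
  have hx : IsIntegral F x := ⟨f, hmo, hfx⟩
  refine (eq_of_monic_of_dvd_of_natDegree_le (minpoly.monic hx) hmo (minpoly.dvd F x hfx) ?_).symm
  rwa [← finrank_eq_natDegree_minpoly_of_adjoin_eq_top hx hgen]

theorem Algebra.discr_powerBasis_of_minpoly_eq_X_pow_sub_C {F L : Type*} [Field F] [Field L]
    [Algebra F L] [Algebra.IsSeparable F L] (B : PowerBasis F L) {a : F}
    (hmin : minpoly F B.gen = X ^ B.dim - C a) :
    Algebra.discr F B.basis = (-1) ^ (B.dim * (B.dim - 1) / 2) *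
      ((B.dim : F) ^ B.dim * ((-1) ^ (B.dim + 1) * a) ^ (B.dim - 1)) := by
  have := B.finite
  have hnorm : Algebra.norm F B.gen = (-1) ^ (B.dim + 1) * a := by
    rw [Algebra.PowerBasis.norm_gen_eq_coeff_zero_minpoly, hmin, coeff_sub, coeff_X_pow,
      if_neg B.dim_ne_zero.symm, coeff_C_zero, zero_sub, pow_succ]
    ring
  rw [Algebra.discr_powerBasis_eq_norm, hmin, derivative_sub, derivative_C, sub_zero,
    derivative_X_pow, map_mul, aeval_C, map_pow, aeval_X, map_mul, Algebra.norm_algebraMap,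
    map_pow, hnorm, B.finrank]

section

variable {R K L : Type*} [CommRing R] [IsDomain R] [UniqueFactorizationMonoid R] [Field K]
  [Field L] [Algebra R K] [IsFractionRing R K] [Algebra K L] [Algebra R L] [IsScalarTower R K L]

theorem mem_adjoin_of_smul_mem_adjoin_of_minpoly_isEisensteinAt {B : PowerBasis K L}
    (hBint : IsIntegral R B.gen) {N : R} (hN : N ≠ 0)
    (hei : ∀ p, Prime p → p ∣ N → (minpoly R B.gen).IsEisensteinAt (Submodule.span R {p}))
    {z : L} (hz : IsIntegral R z) (hNz : N • z ∈ Algebra.adjoin R {B.gen}) :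
    z ∈ Algebra.adjoin R {B.gen} := by
  induction N using UniqueFactorizationMonoid.induction_on_prime generalizing z with
  | h₁ => exact absurd rfl hN
  | h₂ N hunit =>
    obtain ⟨u, rfl⟩ := hunit
    simpa [smul_smul] using Subalgebra.smul_mem _ hNz (↑u⁻¹ : R)
  | h₃ N p hN0 hp ih =>
    rw [mul_smul] at hNz
    refine ih hN0 (fun q hq hqN ↦ hei q hq (dvd_mul_of_dvd_right hqN p)) hz ?_
    exact mem_adjoin_of_smul_prime_smul_of_minpoly_isEisensteinAt hp hBint (hz.smul N) hNz
      (hei p hp (dvd_mul_right p N))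

end

theorem NumberField.RingOfIntegers.adjoin_singleton_eq_top {K : Type*} [Field K]
    {θ : NumberField.RingOfIntegers K} (h : integralClosure ℤ K ≤ Algebra.adjoin ℤ {(θ : K)}) :
    Algebra.adjoin ℤ {θ} = ⊤ := by
  refine eq_top_iff.2 fun z _ ↦ ?_
  have hz : (z : K) ∈ (Algebra.adjoin ℤ {θ}).map (IsScalarTower.toAlgHom ℤ _ K) := by
    rw [AlgHom.map_adjoin_singleton]
    exact h z.isIntegral_coe
  obtain ⟨w, hw, hwz⟩ := hz
  rwa [← NumberField.RingOfIntegers.coe_injective hwz]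

theorem NumberField.mem_adjoin_of_minpoly_eq_X_pow_sub_C {K : Type*} [Field K] [NumberField K]
    (B : PowerBasis ℚ K) {m : ℤ} (hm : Squarefree m)
    (hdim : ∀ p : ℤ, Prime p → p ∣ B.dim → p ∣ m) (hmin : minpoly ℤ B.gen = X ^ B.dim - C m)
    {z : K} (hz : IsIntegral ℤ z) : z ∈ Algebra.adjoin ℤ {B.gen} := by
  set n := B.dim
  have hBint : IsIntegral ℤ B.gen :=
    ⟨_, monic_X_pow_sub_C m B.dim_ne_zero, hmin ▸ minpoly.aeval ℤ B.gen⟩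
  have hminℚ : minpoly ℚ B.gen = X ^ n - C (m : ℚ) := by
    rw [minpoly.isIntegrallyClosed_eq_field_fractions' ℚ hBint, hmin]
    simp
  set N : ℤ := (-1) ^ (n * (n - 1) / 2) * (n ^ n * ((-1) ^ (n + 1) * m) ^ (n - 1))
  have hNz : N • z ∈ Algebra.adjoin ℤ {B.gen} := by
    have hdiscr : Algebra.discr ℚ B.basis = N := by
      rw [Algebra.discr_powerBasis_of_minpoly_eq_X_pow_sub_C B hminℚ]
      push_cast [N]
      rfl
    rw [← Int.cast_smul_eq_zsmul ℚ, ← hdiscr]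
    exact Algebra.discr_mul_isIntegral_mem_adjoin ℚ hBint hz
  have hN : N ≠ 0 := by simp [N, hm.ne_zero]
  refine mem_adjoin_of_smul_mem_adjoin_of_minpoly_isEisensteinAt hBint hN (fun p hp hpN ↦ ?_) hz hNz
  have hpm : p ∣ m := by
    rcases hp.dvd_or_dvd ((isUnit_neg_one.pow _).dvd_mul_left.1 hpN) with hpn | hpm
    · exact hdim p hp (hp.dvd_of_dvd_pow hpn)
    · exact (isUnit_neg_one.pow _).dvd_mul_left.1 (hp.dvd_of_dvd_pow hpm)
  rw [hmin]
  exact isEisensteinAt_X_pow_sub_C_of_squarefree hm hp hpm B.dim_ne_zero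

theorem radical_pow_monogenic_general
    {K : Type*} [Field K] [NumberField K] (n u : ℕ) (hn : 2 ≤ n)
    (hcop : Nat.Coprime u n)
    (α : K)
    (hroot : Polynomial.aeval α
      ((X : ℤ[X]) ^ n - C ((∏ p ∈ n.primeFactors, (p : ℤ)) ^ u)) = 0)
    (hgen : Algebra.adjoin ℚ {α} = ⊤) :
    Irreducible (((X : ℤ[X]) ^ n - C ((∏ p ∈ n.primeFactors, (p : ℤ)) ^ u)).map
        (Int.castRingHom ℚ)) ∧
      ∃ θ : NumberField.RingOfIntegers K, Algebra.adjoin ℤ {θ} = ⊤ := by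
  have hn0 : n ≠ 0 := by omega
  rw [← Nat.cast_prod, ← Nat.radical_eq_prod_primeFactors] at hroot ⊢
  set m : ℕ := UniqueFactorizationMonoid.radical n
  have hm : Squarefree (m : ℤ) :=
    Int.squarefree_natCast.2 UniqueFactorizationMonoid.squarefree_radical
  obtain ⟨θ, hθ⟩ : ∃ θ : K, θ ^ n = m :=
    exists_pow_eq_of_pow_eq_pow_of_coprime (by simp [m]) hcop (by simpa [sub_eq_zero] using hroot)
  obtain ⟨p, hp, hpn⟩ := Nat.exists_prime_and_dvd (show n ≠ 1 by omega)
  have hpℤ : Prime (p : ℤ) := Nat.prime_iff_prime_int.1 hp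
  have hminθ : minpoly ℤ θ = X ^ n - C (m : ℤ) :=
    minpoly.eq_X_pow_sub_C_of_squarefree hm hpℤ
      (hpℤ.dvd_natCast_radical hn0 (Int.natCast_dvd_natCast.2 hpn)) hn0 (by simpa using hθ)
  have hθint : IsIntegral ℤ θ := ⟨_, monic_X_pow_sub_C _ hn0, hminθ ▸ minpoly.aeval ℤ θ⟩
  have hθdeg : (minpoly ℚ θ).natDegree = n := by
    rw [minpoly.isIntegrallyClosed_eq_field_fractions' ℚ hθint, hminθ,
      (monic_X_pow_sub_C _ hn0).natDegree_map, natDegree_X_pow_sub_C]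
  set f : ℚ[X] := ((X : ℤ[X]) ^ n - C ((m : ℤ) ^ u)).map (Int.castRingHom ℚ)
  have hf : f.Monic := (monic_X_pow_sub_C _ hn0).map _
  have hfdeg : f.natDegree = n := by
    rw [(monic_X_pow_sub_C _ hn0).natDegree_map, natDegree_X_pow_sub_C]
  have hfα : aeval α f = 0 := by simpa [f] using hroot
  have hminα : minpoly ℚ α = f :=
    minpoly.eq_of_adjoin_eq_top hgen hf hfα (hfdeg ▸ hθdeg ▸ minpoly.natDegree_le θ)
  have hθgen : Algebra.adjoin ℚ {θ} = ⊤ := by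
    refine Algebra.adjoin_eq_top_of_finrank_le_natDegree_minpoly ?_
    rw [finrank_eq_natDegree_minpoly_of_adjoin_eq_top (.of_finite ℚ α) hgen, hminα, hfdeg, hθdeg]
  let B := PowerBasis.ofAdjoinEqTop hθint.tower_top hθgen
  have hB : B.dim = n := hθdeg
  refine ⟨hminα ▸ minpoly.irreducible (.of_finite ℚ α), ⟨θ, hθint⟩,
    NumberField.RingOfIntegers.adjoin_singleton_eq_top fun z hz ↦ ?_⟩
  exact NumberField.mem_adjoin_of_minpoly_eq_X_pow_sub_C B hm
    (fun q hq hqn ↦ hq.dvd_natCast_radical hn0 (hB ▸ hqn)) (hB ▸ hminθ) hz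

/-- Let `n ≥ 2`, let `n* = ∏_{p ∣ n, p prime} p` be the radical of `n`, and let `u` be a
positive integer coprime to `n`. Then `f(x) = x^n - (n*)^u` is irreducible over `ℚ` and
the number field `K = ℚ(α)`, where `α` is a root of `f`, is monogenic. -/
theorem radical_pow_monogenic
    {K : Type*} [Field K] [NumberField K] (n u : ℕ) (hn : 2 ≤ n)
    (hu : 0 < u) (hcop : Nat.Coprime u n)
    (α : K)
    (hroot : Polynomial.aeval α
      ((X : ℤ[X]) ^ n - C ((∏ p ∈ n.primeFactors, (p : ℤ)) ^ u)) = 0)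
    (hgen : Algebra.adjoin ℚ {α} = ⊤) :
    Irreducible (((X : ℤ[X]) ^ n - C ((∏ p ∈ n.primeFactors, (p : ℤ)) ^ u)).map
        (Int.castRingHom ℚ)) ∧
      ∃ θ : NumberField.RingOfIntegers K, Algebra.adjoin ℤ {θ} = ⊤ :=
  radical_pow_monogenic_general n u hn hcop α hroot hgen
end

section
/- Let p be a prime dividing n but not dividing m, write n = p^r · t with p not dividing t, and let φ ∈ ℤ[x] be a monic polynomial whose reduction modulo p is irreducible in 𝔽_p[x] and divides the reduction of x^n − m modulo p. If R ∈ ℤ[x] is the remainder of the Euclidean division of x^t − m by φ in ℤ[x], then every coefficient of R is divisible by p. -/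
open Polynomial

/-- Let `p` be a prime dividing `n` but not `m`, `n = p^r·t` with `p ∤ t`, and let
`φ ∈ ℤ[x]` be monic with reduction mod `p` irreducible and dividing the reduction of
`x^n - m`. Then every coefficient of the remainder `R` of the Euclidean division of
`x^t - m` by `φ` in `ℤ[x]` is divisible by `p`. -/
theorem remainder_coeffs_dvd
    (p n r t : ℕ) (m : ℤ) (hp : p.Prime) (hpn : p ∣ n) (hpm : ¬ (p : ℤ) ∣ m)
    (hnrt : n = p ^ r * t) (hpt : ¬ p ∣ t)
    (φ : ℤ[X]) (hmonic : φ.Monic)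
    (hirr : Irreducible (φ.map (Int.castRingHom (ZMod p))))
    (hdvd : φ.map (Int.castRingHom (ZMod p)) ∣
      ((X : ℤ[X]) ^ n - C m).map (Int.castRingHom (ZMod p))) :
    ∀ i : ℕ, (p : ℤ) ∣ (((X : ℤ[X]) ^ t - C m) %ₘ φ).coeff i := by
  intro i
  haveI : Fact p.Prime := ⟨hp⟩
  set f := Int.castRingHom (ZMod p)
  -- reduce x^n - m
  have key : ((X : ℤ[X]) ^ n - C m).map f =
      (((X : ℤ[X]) ^ t - C m).map f) ^ p ^ r := by
    simp only [Polynomial.map_sub, Polynomial.map_pow, map_C, map_X]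
    rw [sub_pow_char_pow, ← pow_mul, Nat.mul_comm t (p ^ r), ← hnrt, ← map_pow, ZMod.pow_card_pow]
  have hdvd' : φ.map f ∣ ((X : ℤ[X]) ^ t - C m).map f := by
    have := hdvd
    rw [key] at this
    exact hirr.prime.dvd_of_dvd_pow this
  have hzero : (((X : ℤ[X]) ^ t - C m) %ₘ φ).map f = 0 := by
    rw [Polynomial.map_modByMonic _ hmonic,
      Polynomial.modByMonic_eq_zero_iff_dvd (hmonic.map f)]
    exact hdvd'
  have := congrArg (fun q => Polynomial.coeff q i) hzero
  simp only [Polynomial.coeff_map, Polynomial.coeff_zero] at this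
  exact (ZMod.intCast_zmod_eq_zero_iff_dvd _ p).mp this
end
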